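/- arXiv:1105.4396 — 2 statements merged into one kernel-verified Lean document; each statement's English description precedes it below -/
import Mathlib

section
/- For the MA(q) process with q > 3 and continuous i.i.d. innovations, the conditional probability that the next local maximum after ξ_i occurs at distance 3 (at ξ_{i+3}), given a local maximum at ξ_i, equals 1/4. -/
open MeasureTheory ProbabilityTheory

/-!
Since `ξ (k + 1) - ξ k = ε (k + 1) - ε (k - q)`, every comparison of neighbouring values of `ξ`
is a comparison of two distinct innovations. A local maximum at `i` is the event
`ε (i - 1 - q) < ε i, ε (i + 1) < ε (i - q)`, and, up to the null event `ξ (i + 1) = ξ (i + 2)`,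
the target event is `ε (i + 2 - q) < ε (i + 3), ε (i + 4) < ε (i + 3 - q)`. For `q > 3` these
involve disjoint sets of innovations, hence are independent, and by exchangeability each
of the four comparisons has probability `1 / 2`; so the conditional probability is `1 / 4`.
-/

/-- Error terms of an MA(q) process: `ξ i ω = ∑_{j=0}^q ε (i - j) ω`. -/
noncomputable def MAerr {Ω : Type*} (q : ℕ) (ε : ℤ → Ω → ℝ) (i : ℤ) (ω : Ω) : ℝ :=
  ∑ j ∈ Finset.range (q + 1), ε (i - (j : ℤ)) ω

namespace ProbabilityTheory

section Comparisons

variable {Ω : Type*} [MeasurableSpace Ω] {μ : Measure Ω} {X Y : Ω → ℝ}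

lemma measure_setOf_eq_eq_zero_of_indepFun [IsFiniteMeasure μ] (hX : Measurable X)
    (hY : Measurable Y) (hXY : IndepFun X Y μ) (hY₀ : ∀ a, μ {ω | Y ω = a} = 0) :
    μ {ω | X ω = Y ω} = 0 := by
  have hdiag : MeasurableSet {p : ℝ × ℝ | p.1 = p.2} :=
    measurableSet_eq_fun measurable_fst measurable_snd
  have hatom (x : ℝ) : μ.map Y {x} = 0 := by
    rw [Measure.map_apply hY (measurableSet_singleton x)]
    exact hY₀ x
  change μ ((fun ω ↦ (X ω, Y ω)) ⁻¹' {p : ℝ × ℝ | p.1 = p.2}) = 0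
  rw [← Measure.map_apply (hX.prodMk hY) hdiag,
    (indepFun_iff_map_prod_eq_prod_map_map hX.aemeasurable hY.aemeasurable).1 hXY,
    Measure.prod_apply hdiag]
  simp [hatom]

lemma measure_setOf_lt_eq_half [IsProbabilityMeasure μ] (hX : Measurable X)
    (hY : Measurable Y) (hXY : IndepFun X Y μ) (hid : IdentDistrib X Y μ μ)
    (hY₀ : ∀ a, μ {ω | Y ω = a} = 0) :
    μ {ω | X ω < Y ω} = 1 / 2 := by
  have hswap : IdentDistrib (fun ω ↦ (X ω, Y ω)) (fun ω ↦ (Y ω, X ω)) μ μ := by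
    refine ⟨(hX.prodMk hY).aemeasurable, (hY.prodMk hX).aemeasurable, ?_⟩
    rw [(indepFun_iff_map_prod_eq_prod_map_map hX.aemeasurable hY.aemeasurable).1 hXY,
      (indepFun_iff_map_prod_eq_prod_map_map hY.aemeasurable hX.aemeasurable).1 hXY.symm,
      hid.map_eq]
  have hsymm : μ {ω | X ω < Y ω} = μ {ω | Y ω < X ω} :=
    hswap.measure_mem_eq (measurableSet_lt measurable_fst measurable_snd)
  have hties : μ {ω | X ω < Y ω}ᶜ = μ {ω | Y ω < X ω} := by
    refine measure_congr ?_
    have hne : ∀ᵐ ω ∂μ, X ω ≠ Y ω :=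
      measure_eq_zero_iff_ae_notMem.1 (measure_setOf_eq_eq_zero_of_indepFun hX hY hXY hY₀)
    filter_upwards [hne] with ω hω
    simp only [Set.compl_ofPred, not_lt]
    exact propext hω.symm.le_iff_lt
  have htotal : 2 * μ {ω | X ω < Y ω} = 1 := by
    rw [two_mul]
    nth_rewrite 2 [hsymm]
    rw [← hties, measure_add_measure_compl (measurableSet_lt hX hY), measure_univ]
  exact (ENNReal.eq_div_iff two_ne_zero ENNReal.ofNat_ne_top).2 htotal

end Comparisons

section Blocks

variable {Ω ι : Type*} {ε : ι → Ω → ℝ}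

lemma measurableSet_setOf_lt_of_mem {S : Set ι} {a b : ι} (ha : a ∈ S) (hb : b ∈ S) :
    MeasurableSet[⨆ i ∈ S, MeasurableSpace.comap (ε i) inferInstance]
      {ω | ε a ω < ε b ω} := by
  let _ : MeasurableSpace Ω := ⨆ i ∈ S, MeasurableSpace.comap (ε i) inferInstance
  have hle : ∀ j ∈ S, Measurable (ε j) := fun j hj ↦
    Measurable.of_comap_le (le_iSup₂ (f := fun i (_ : i ∈ S) ↦
      MeasurableSpace.comap (ε i) inferInstance) j hj)
  exact measurableSet_lt (hle a ha) (hle b hb)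

variable [MeasurableSpace Ω] {μ : Measure Ω}

lemma iIndepFun.measure_inter_eq_mul_of_disjoint (hmeas : ∀ i, Measurable (ε i))
    (hindep : iIndepFun ε μ) {S T : Set ι} (hST : Disjoint S T) {A B : Set Ω}
    (hA : MeasurableSet[⨆ i ∈ S, MeasurableSpace.comap (ε i) inferInstance] A)
    (hB : MeasurableSet[⨆ i ∈ T, MeasurableSpace.comap (ε i) inferInstance] B) :
    μ (A ∩ B) = μ A * μ B :=
  (Indep_iff _ _ μ).1 (indep_iSup_of_disjoint (fun i ↦ (hmeas i).comap_le)
    ((iIndepFun_iff_iIndep _ _ _).1 hindep) hST) A B hA hB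

lemma iIndepFun.measure_setOf_lt_inter_setOf_lt [IsProbabilityMeasure μ]
    (hmeas : ∀ i, Measurable (ε i)) (hindep : iIndepFun ε μ)
    (hid : ∀ i j, IdentDistrib (ε i) (ε j) μ μ) (hatomless : ∀ i a, μ {ω | ε i ω = a} = 0)
    {a b c d : ι} (hab : a ≠ b) (hcd : c ≠ d) (habcd : Disjoint ({a, b} : Set ι) {c, d}) :
    μ ({ω | ε a ω < ε b ω} ∩ {ω | ε c ω < ε d ω}) = 1 / 4 := by
  have half {x y : ι} (hxy : x ≠ y) : μ {ω | ε x ω < ε y ω} = 1 / 2 :=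
    measure_setOf_lt_eq_half (hmeas x) (hmeas y) (hindep.indepFun hxy) (hid x y) (hatomless y)
  rw [hindep.measure_inter_eq_mul_of_disjoint hmeas habcd
      (measurableSet_setOf_lt_of_mem (by simp) (by simp))
      (measurableSet_setOf_lt_of_mem (by simp) (by simp)),
    half hab, half hcd, one_div, ← ENNReal.mul_inv (by simp) (by simp)]
  norm_num

end Blocks

end ProbabilityTheory

section MovingAverage

variable {Ω : Type*} (q : ℕ) (ε : ℤ → Ω → ℝ)

lemma MAerr_add_one (k : ℤ) (ω : Ω) :
    MAerr q ε (k + 1) ω = MAerr q ε k ω + ε (k + 1) ω - ε (k - q) ω := by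
  unfold MAerr
  rw [Finset.sum_range_succ' (fun j ↦ ε (k + 1 - (j : ℤ)) ω),
    Finset.sum_range_succ (fun j ↦ ε (k - (j : ℤ)) ω)]
  simp only [Nat.cast_add, Nat.cast_one, Nat.cast_zero, add_sub_add_right_eq_sub, sub_zero]
  ring

variable {q ε} {k l : ℤ}

lemma MAerr_lt_MAerr_succ_iff (hl : k + 1 = l) (ω : Ω) :
    MAerr q ε k ω < MAerr q ε l ω ↔ ε (k - q) ω < ε l ω := by
  subst hl
  rw [MAerr_add_one]
  constructor <;> intro h <;> linarith

lemma MAerr_succ_lt_MAerr_iff (hl : k + 1 = l) (ω : Ω) :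
    MAerr q ε l ω < MAerr q ε k ω ↔ ε l ω < ε (k - q) ω := by
  subst hl
  rw [MAerr_add_one]
  constructor <;> intro h <;> linarith

lemma ae_MAerr_ne_MAerr_succ [MeasurableSpace Ω] {μ : Measure Ω} [IsFiniteMeasure μ]
    (hmeas : ∀ i, Measurable (ε i)) (hindep : iIndepFun ε μ)
    (hatomless : ∀ i a, μ {ω | ε i ω = a} = 0) (hl : k + 1 = l) :
    ∀ᵐ ω ∂μ, MAerr q ε k ω ≠ MAerr q ε l ω := by
  have hne : k - q ≠ l := by omega
  have hties := measure_setOf_eq_eq_zero_of_indepFun (hmeas _) (hmeas _)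
    (hindep.indepFun hne) (hatomless l)
  filter_upwards [measure_eq_zero_iff_ae_notMem.1 hties] with ω hω
  subst hl
  rw [MAerr_add_one]
  intro h
  exact hω (show ε (k - q) ω = ε (k + 1) ω by linarith)

lemma setOf_MAerr_localMax_eq (i : ℤ) :
    {ω | MAerr q ε (i - 1) ω < MAerr q ε i ω ∧ MAerr q ε i ω > MAerr q ε (i + 1) ω}
      = {ω | ε (i - 1 - q) ω < ε i ω} ∩ {ω | ε (i + 1) ω < ε (i - q) ω} := by
  ext ω
  rw [Set.mem_ofPred_eq, gt_iff_lt, MAerr_lt_MAerr_succ_iff (by ring),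
    MAerr_succ_lt_MAerr_iff rfl]
  rfl

lemma setOf_MAerr_nextLocalMax_three_ae_eq [MeasurableSpace Ω] {μ : Measure Ω}
    [IsFiniteMeasure μ] (hmeas : ∀ i, Measurable (ε i)) (hindep : iIndepFun ε μ)
    (hatomless : ∀ i a, μ {ω | ε i ω = a} = 0) (i : ℤ) :
    {ω | ((MAerr q ε (i + 1) ω < MAerr q ε (i + 2) ω ∧
              MAerr q ε (i + 2) ω < MAerr q ε (i + 3) ω) ∨
            (MAerr q ε (i + 1) ω > MAerr q ε (i + 2) ω ∧
              MAerr q ε (i + 2) ω < MAerr q ε (i + 3) ω)) ∧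
        MAerr q ε (i + 3) ω > MAerr q ε (i + 4) ω}
      =ᵐ[μ] ({ω | ε (i + 2 - q) ω < ε (i + 3) ω} ∩ {ω | ε (i + 4) ω < ε (i + 3 - q) ω} :
        Set Ω) := by
  filter_upwards [ae_MAerr_ne_MAerr_succ (q := q) hmeas hindep hatomless
    (by ring : i + 1 + 1 = i + 2)] with ω hω
  change ((_ ∨ _) ∧ _) = (_ ∧ _)
  rw [gt_iff_lt, gt_iff_lt, ← or_and_right, lt_or_lt_iff_ne, MAerr_lt_MAerr_succ_iff (by ring),
    MAerr_succ_lt_MAerr_iff (by ring)]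
  simp only [hω, ne_eq, not_false_eq_true, true_and]
  rfl

end MovingAverage

/-- For `q > 3` with atomless i.i.d. innovations, the conditional probability that the
next local maximum after `ξ_i` occurs at distance `3`, given a local maximum at `i`,
equals `1/4`. -/
theorem MA_cond_prob_dist3
    {Ω : Type*} [MeasurableSpace Ω] (μ : Measure Ω) [IsProbabilityMeasure μ]
    (ε : ℤ → Ω → ℝ) (hmeas : ∀ i, Measurable (ε i))
    (hindep : iIndepFun ε μ)
    (hid : ∀ i j : ℤ, IdentDistrib (ε i) (ε j) μ μ)
    (hatomless : ∀ (i : ℤ) (a : ℝ), μ {ω | ε i ω = a} = 0)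
    (q : ℕ) (hq : 3 < q) (i : ℤ) :
    μ[|{ω | MAerr q ε (i - 1) ω < MAerr q ε i ω ∧ MAerr q ε i ω > MAerr q ε (i + 1) ω}]
      {ω | ((MAerr q ε (i + 1) ω < MAerr q ε (i + 2) ω ∧
              MAerr q ε (i + 2) ω < MAerr q ε (i + 3) ω) ∨
            (MAerr q ε (i + 1) ω > MAerr q ε (i + 2) ω ∧
              MAerr q ε (i + 2) ω < MAerr q ε (i + 3) ω)) ∧
        MAerr q ε (i + 3) ω > MAerr q ε (i + 4) ω} = 1 / 4 := by
  rw [setOf_MAerr_localMax_eq, measure_congr (cond_absolutelyContinuous.ae_eq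
    (setOf_MAerr_nextLocalMax_three_ae_eq hmeas hindep hatomless i)),
    cond_apply ((measurableSet_lt (hmeas _) (hmeas _)).inter
      (measurableSet_lt (hmeas _) (hmeas _)))]
  have hsep : Disjoint ({i - 1 - q, i, i + 1, i - q} : Set ℤ)
      {i + 2 - q, i + 3, i + 4, i + 3 - q} := by
    simp only [Set.disjoint_left, Set.mem_insert_iff, Set.mem_singleton_iff]
    omega
  rw [hindep.measure_inter_eq_mul_of_disjoint hmeas hsep
      ((measurableSet_setOf_lt_of_mem (by simp) (by simp)).inter
        (measurableSet_setOf_lt_of_mem (by simp) (by simp)))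
      ((measurableSet_setOf_lt_of_mem (by simp) (by simp)).inter
        (measurableSet_setOf_lt_of_mem (by simp) (by simp))),
    hindep.measure_setOf_lt_inter_setOf_lt hmeas hid hatomless ?_ ?_ ?_,
    ENNReal.inv_mul_cancel_left (by simp) (by simp),
    hindep.measure_setOf_lt_inter_setOf_lt hmeas hid hatomless ?_ ?_ ?_]
  all_goals
    simp only [ne_eq, Set.disjoint_left, Set.mem_insert_iff, Set.mem_singleton_iff]
    omega
end

section
/- For the MA(q) process with q > 3 and continuous i.i.d. innovations, the probability that ξ_{i-1} < ξ_i > ξ_{i+1}, ξ_{i+2} < ξ_{i+3} > ξ_{i+4} holds (with no constraint relating ξ_{i+1}, ξ_{i+2}) equals 1/16, since the middle comparison ε_{i-q+1} vs ε_{i+2} contributes probability 1 to the union of the two orderings. -/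
/-!
Consecutive moving sums telescope: `ξ (a + 1) - ξ a = ε (a + 1) - ε (a - q)`. So the four
comparisons become `ε (i-1-q) < ε i`, `ε (i+1) < ε (i-q)`, `ε (i+2-q) < ε (i+3)` and
`ε (i+4) < ε (i+3-q)`, which for `q > 3` involve eight distinct innovations; the four events are
therefore independent. Each has probability `1/2`, because a pair of i.i.d. innovations is
exchangeable and, the law being atomless, ties are null.
-/

open MeasureTheory ProbabilityTheory

section MovingAverage

variable {Ω : Type*} (q : ℕ) (ε : ℤ → Ω → ℝ)

theorem MAerr_add_one_sub (a : ℤ) (ω : Ω) :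
    MAerr q ε (a + 1) ω - MAerr q ε a ω = ε (a + 1) ω - ε (a - q) ω := by
  rw [MAerr, MAerr, Finset.sum_range_succ', Finset.sum_range_succ]
  simp only [Nat.cast_add, Nat.cast_one, Nat.cast_zero, sub_zero, add_sub_add_right_eq_sub]
  ring

theorem MAerr_lt_add_one_iff (a : ℤ) (ω : Ω) :
    MAerr q ε a ω < MAerr q ε (a + 1) ω ↔ ε (a - q) ω < ε (a + 1) ω := by
  rw [← sub_pos, MAerr_add_one_sub, sub_pos]

theorem MAerr_add_one_lt_iff (a : ℤ) (ω : Ω) :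
    MAerr q ε (a + 1) ω < MAerr q ε a ω ↔ ε (a + 1) ω < ε (a - q) ω := by
  rw [← sub_neg, MAerr_add_one_sub, sub_neg]

theorem setOf_MAerr_two_peaks_gap_eq (i : ℤ) :
    {ω | MAerr q ε (i - 1) ω < MAerr q ε i ω ∧ MAerr q ε i ω > MAerr q ε (i + 1) ω ∧
        MAerr q ε (i + 2) ω < MAerr q ε (i + 3) ω ∧ MAerr q ε (i + 3) ω > MAerr q ε (i + 4) ω} =
      ⋂ k ∈ Finset.univ, {ω | ε (![i - 1 - q, i + 1, i + 2 - q, i + 4] k) ω <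
        ε (![i, i - q, i + 3, i + 3 - q] k) ω} := by
  ext ω
  have h₀ := MAerr_lt_add_one_iff q ε (i - 1) ω
  have h₂ := MAerr_lt_add_one_iff q ε (i + 2) ω
  have h₃ := MAerr_add_one_lt_iff q ε (i + 3) ω
  rw [sub_add_cancel] at h₀
  rw [add_assoc, two_add_one_eq_three] at h₂
  rw [add_assoc, show (3 : ℤ) + 1 = 4 by norm_num] at h₃
  simp [Fin.forall_fin_succ, h₀, MAerr_add_one_lt_iff, h₂, h₃]

end MovingAverage

namespace ProbabilityTheory

variable {Ω : Type*}

theorem measurableSet_lt_iSup_comap {ι : Type*} {X : ι → Ω → ℝ} {S : Set ι} {i j : ι}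
    (hi : i ∈ S) (hj : j ∈ S) :
    MeasurableSet[⨆ k ∈ S, MeasurableSpace.comap (X k) inferInstance] {ω | X i ω < X j ω} := by
  have hle : ∀ k ∈ S, MeasurableSpace.comap (X k) inferInstance ≤
      ⨆ k ∈ S, MeasurableSpace.comap (X k) inferInstance :=
    fun k hk => le_iSup₂ (f := fun k (_ : k ∈ S) => MeasurableSpace.comap (X k) inferInstance) k hk
  exact measurableSet_lt (measurable_iff_comap_le.2 (hle i hi))
    (measurable_iff_comap_le.2 (hle j hj))

variable [MeasurableSpace Ω] {μ : Measure Ω}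

theorem iIndepFun.measure_biInter_lt_eq_prod {ι κ : Type*} {X : ι → Ω → ℝ}
    (hX : iIndepFun X μ) (hmeas : ∀ i, Measurable (X i)) {a b : κ → ι}
    (hab : Pairwise fun k l => Disjoint ({a k, b k} : Set ι) {a l, b l}) (s : Finset κ) :
    μ (⋂ k ∈ s, {ω | X (a k) ω < X (b k) ω}) = ∏ k ∈ s, μ {ω | X (a k) ω < X (b k) ω} := by
  classical
  have hm : iIndep (fun i => MeasurableSpace.comap (X i) inferInstance) μ :=
    (iIndepFun_iff_iIndep _ _ _).1 hX
  induction s using Finset.induction_on with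
  | empty => simp [hX.isProbabilityMeasure.measure_univ]
  | insert k s hk ih =>
    have hdisj : Disjoint {a k, b k} (⋃ l ∈ s, ({a l, b l} : Set ι)) :=
      Set.disjoint_iUnion₂_right.2 fun l hl => hab (ne_of_mem_of_not_mem hl hk).symm
    rw [Finset.set_biInter_insert, Finset.prod_insert hk, ← ih]
    refine (Indep_iff _ _ _).1 (indep_iSup_of_disjoint (fun i => (hmeas i).comap_le) hm hdisj) _ _
      (measurableSet_lt_iSup_comap (by simp) (by simp)) ?_
    exact .biInter s.countable_toSet fun l hl => measurableSet_lt_iSup_comap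
      (Set.mem_biUnion hl (by simp)) (Set.mem_biUnion hl (by simp))

variable {X Y : Ω → ℝ}

theorem IndepFun.measure_eq_eq_zero [IsFiniteMeasure μ] (hX : Measurable X) (hY : Measurable Y)
    (hXY : IndepFun X Y μ) (hY_atom : ∀ a, μ {ω | Y ω = a} = 0) :
    μ {ω | X ω = Y ω} = 0 := by
  have hdiag : MeasurableSet {p : ℝ × ℝ | p.1 = p.2} :=
    measurableSet_eq_fun measurable_fst measurable_snd
  calc μ {ω | X ω = Y ω} = (μ.map X).prod (μ.map Y) {p | p.1 = p.2} := by
        rw [← hXY.map_prod_eq_prod_map_map hX.aemeasurable hY.aemeasurable,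
          Measure.map_apply (hX.prodMk hY) hdiag]
        rfl
    _ = ∫⁻ x, μ.map Y {x} ∂μ.map X := by
        rw [Measure.prod_apply hdiag]
        congr! with x
        ext y
        simp [eq_comm]
    _ = 0 := by simp [Measure.map_apply hY (measurableSet_singleton _), Set.preimage, hY_atom]

theorem IndepFun.measure_lt_eq_half [IsProbabilityMeasure μ] (hX : Measurable X)
    (hY : Measurable Y) (hXY : IndepFun X Y μ) (hid : IdentDistrib X Y μ μ)
    (hY_atom : ∀ a, μ {ω | Y ω = a} = 0) :
    μ {ω | X ω < Y ω} = 1 / 2 := by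
  have hlt : MeasurableSet {ω | X ω < Y ω} := measurableSet_lt hX hY
  have hswap : μ {ω | X ω < Y ω} = μ {ω | Y ω < X ω} :=
    (hid.prodMk hid.symm hXY hXY.symm).measure_mem_eq
      (measurableSet_lt measurable_fst measurable_snd)
  have hcompl : μ {ω | Y ω < X ω} = μ {ω | X ω < Y ω}ᶜ :=
    measure_eq_measure_of_null_sdiff (fun ω (h : Y ω < X ω) => not_lt.2 h.le)
      (measure_mono_null (fun ω ⟨(h₁ : ¬X ω < Y ω), (h₂ : ¬Y ω < X ω)⟩ =>
        le_antisymm (not_lt.1 h₂) (not_lt.1 h₁)) (hXY.measure_eq_eq_zero hX hY hY_atom))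
  have htwo : 2 * μ {ω | X ω < Y ω} = 1 := calc
    _ = μ {ω | X ω < Y ω} + μ {ω | X ω < Y ω}ᶜ := by rw [two_mul, ← hcompl, ← hswap]
    _ = 1 := by rw [measure_add_measure_compl hlt, measure_univ]
  rw [ENNReal.eq_div_iff two_ne_zero ENNReal.ofNat_ne_top, htwo]

end ProbabilityTheory

/-- For `q > 3` with atomless i.i.d. innovations, the probability that
`ξ_{i-1} < ξ_i > ξ_{i+1}` and `ξ_{i+2} < ξ_{i+3} > ξ_{i+4}` (with no constraint
relating `ξ_{i+1}` and `ξ_{i+2}`) equals `1/16`. -/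
theorem MA_prob_two_peaks_gap
    {Ω : Type*} [MeasurableSpace Ω] (μ : Measure Ω) [IsProbabilityMeasure μ]
    (ε : ℤ → Ω → ℝ) (hmeas : ∀ i, Measurable (ε i))
    (hindep : iIndepFun ε μ)
    (hid : ∀ i j : ℤ, IdentDistrib (ε i) (ε j) μ μ)
    (hatomless : ∀ (i : ℤ) (a : ℝ), μ {ω | ε i ω = a} = 0)
    (q : ℕ) (hq : 3 < q) (i : ℤ) :
    μ {ω | MAerr q ε (i - 1) ω < MAerr q ε i ω ∧ MAerr q ε i ω > MAerr q ε (i + 1) ω ∧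
        MAerr q ε (i + 2) ω < MAerr q ε (i + 3) ω ∧
        MAerr q ε (i + 3) ω > MAerr q ε (i + 4) ω} = 1 / 16 := by
  rw [setOf_MAerr_two_peaks_gap_eq]
  set a : Fin 4 → ℤ := ![i - 1 - q, i + 1, i + 2 - q, i + 4]
  set b : Fin 4 → ℤ := ![i, i - q, i + 3, i + 3 - q]
  have hq' : (3 : ℤ) < q := by exact_mod_cast hq
  have hdisj : Pairwise fun k l => Disjoint ({a k, b k} : Set ℤ) {a l, b l} := by
    intro k l hkl
    fin_cases k <;> fin_cases l <;> simp_all [a, b] <;> omega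
  have hhalf : ∀ k, μ {ω | ε (a k) ω < ε (b k) ω} = 1 / 2 := by
    intro k
    have hne : a k ≠ b k := by fin_cases k <;> simp [a, b] <;> omega
    exact (hindep.indepFun hne).measure_lt_eq_half (hmeas _) (hmeas _) (hid _ _) (hatomless _)
  rw [hindep.measure_biInter_lt_eq_prod hmeas hdisj, Finset.prod_congr rfl fun k _ => hhalf k,
    Finset.prod_const, Finset.card_fin, one_div, one_div, ← ENNReal.inv_pow]
  norm_num
end
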